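/- Let k ≥ 1 be an integer, γ = π/(6k), f₁(t) = sin t − cos t, f₂(t) = −sin t − cos t, and define S₂'(k) = ∑_{i=k+1}^{2k} (f₁(iγ) − f₁((i−1)γ)) · (f₂(6kγ) − f₂((4k+i)γ)). Then there is an absolute constant K such that for every k ≥ 1, | S₂'(k) − (√3 − 5/4 − π/12) | ≤ K/k. -/

import Mathlib

open Real

/-- `f₁(t) = sin t − cos t`. -/
noncomputable def f1 (t : ℝ) : ℝ := Real.sin t - Real.cos t

/-- `f₂(t) = −sin t − cos t`. -/
noncomputable def f2 (t : ℝ) : ℝ := -Real.sin t - Real.cos t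

/-- `f₃(t) = −sin t + cos t`. -/
noncomputable def f3 (t : ℝ) : ℝ := -Real.sin t + Real.cos t

/-- The angle `γ = π/(6k)`. -/
noncomputable def gam (k : ℕ) : ℝ := Real.pi / (6 * k)

/-- The sum `S₂'(k)`. -/
noncomputable def S2' (k : ℕ) : ℝ :=
  ∑ i ∈ Finset.Icc (k + 1) (2 * k),
    (f1 ((i : ℝ) * gam k) - f1 (((i : ℝ) - 1) * gam k)) *
      (f2 ((6 * (k : ℝ)) * gam k) - f2 ((4 * (k : ℝ) + (i : ℝ)) * gam k))

open Finset

/-!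
Write `h = γ/2`. Each summand equals
`f₁(iγ) − f₁((i−1)γ) + 2 sin h (sin(2iγ − h + 2π/3) − sin(h + π/6))`.
The first part telescopes to `f₁(π/3) − f₁(π/6) = √3 − 1`; after multiplication by `cos h` the
sines in the second part telescope as well, via `2 sin γ sin t = cos(t − γ) − cos(t + γ)`.
This gives `S₂'(k)` in closed form, and since `kγ = π/6` its distance to `√3 − 5/4 − π/12` is
made of `k(γ − sin γ)`, `k sin² h` and `tan h`, each of which is `O(γ) = O(1/k)`.
-/

lemma f2_pi : f2 π = 1 := by simp [f2]

lemma natCast_mul_gam {k : ℕ} (hk : k ≠ 0) : (k : ℝ) * gam k = π / 6 := by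
  unfold gam
  field_simp

lemma gam_pos {k : ℕ} (hk : k ≠ 0) : 0 < gam k := by
  unfold gam
  positivity

lemma gam_le_pi_div_six {k : ℕ} (hk : k ≠ 0) : gam k ≤ π / 6 := by
  rw [← natCast_mul_gam hk]
  exact le_mul_of_one_le_left (gam_pos hk).le (by exact_mod_cast Nat.one_le_iff_ne_zero.2 hk)

lemma cos_gam_div_two_pos {k : ℕ} (hk : k ≠ 0) : 0 < cos (gam k / 2) := by
  have := gam_le_pi_div_six hk
  have := gam_pos hk
  exact cos_pos_of_mem_Ioo ⟨by linarith, by linarith [pi_pos]⟩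

lemma f1_sub_f1_sub (x d : ℝ) :
    f1 x - f1 (x - d) = 2 * sin (d / 2) * (cos (x - d / 2) + sin (x - d / 2)) := by
  obtain ⟨u, rfl⟩ : ∃ u, x = u + d / 2 := ⟨x - d / 2, by ring⟩
  rw [show u + d / 2 - d = u - d / 2 by ring, add_sub_cancel_right]
  simp only [f1, sin_add, cos_add, sin_sub, cos_sub]
  ring

lemma cos_add_sin_mul_sin_add_cos (u y : ℝ) :
    (cos u + sin u) * (sin y + cos y) = sin (u + y) + cos (u - y) := by
  rw [sin_add, cos_sub]
  ring

lemma f1_sub_f1_sub_mul_one_sub_f2 (x d : ℝ) :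
    (f1 x - f1 (x - d)) * (1 - f2 (x + 2 * π / 3)) =
      f1 x - f1 (x - d) +
        2 * sin (d / 2) * (sin (2 * x - d / 2 + 2 * π / 3) - sin (d / 2 + π / 6)) := by
  have key := cos_add_sin_mul_sin_add_cos (x - d / 2) (x + 2 * π / 3)
  rw [show x - d / 2 + (x + 2 * π / 3) = 2 * x - d / 2 + 2 * π / 3 by ring,
    show x - d / 2 - (x + 2 * π / 3) = -(d / 2 + π / 6 + π / 2) by ring,
    cos_neg, cos_add_pi_div_two] at key
  rw [f1_sub_f1_sub]
  simp only [f2]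
  linear_combination 2 * sin (d / 2) * key

lemma two_sin_mul_sum_range_sin (a d : ℝ) (n : ℕ) :
    2 * sin d * ∑ j ∈ range n, sin (a + 2 * j * d) = cos (a - d) - cos (a + (2 * n - 1) * d) := by
  let F : ℕ → ℝ := fun j => -cos (a + (2 * j - 1) * d)
  have hstep (j : ℕ) : 2 * sin d * sin (a + 2 * j * d) = F (j + 1) - F j := by
    rw [two_mul_sin_mul_sin, ← cos_neg (d - _)]
    simp only [F]
    push_cast
    ring_nf
  rw [mul_sum, sum_congr rfl fun j _ => hstep j, sum_range_sub]
  simp only [F]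
  push_cast
  ring_nf

lemma S2'_eq_sum_range {k : ℕ} (hk : k ≠ 0) :
    S2' k = ∑ j ∈ range k, (f1 ((k + 1 + j) * gam k) - f1 ((k + 1 + j) * gam k - gam k)) *
      (1 - f2 ((k + 1 + j) * gam k + 2 * π / 3)) := by
  have hkγ := natCast_mul_gam hk
  rw [S2', ← Ico_add_one_right_eq_Icc, sum_Ico_eq_sum_range,
    show 2 * k + 1 - (k + 1) = k by omega]
  refine sum_congr rfl fun j _ => ?_
  push_cast
  rw [show 6 * (k : ℝ) * gam k = π by linear_combination 6 * hkγ, f2_pi,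
    show (4 * (k : ℝ) + (k + 1 + j)) * gam k = (k + 1 + j) * gam k + 2 * π / 3 by
    linear_combination 4 * hkγ]
  ring_nf

lemma S2'_eq_closed_form {k : ℕ} (hk : k ≠ 0) :
    S2' k = √3 - 1 + (cos (gam k / 2 + π / 3) - cos (gam k / 2)) / (2 * cos (gam k / 2))
      - 2 * k * sin (gam k / 2) * sin (gam k / 2 + π / 6) := by
  have hkγ := natCast_mul_gam hk
  rw [S2'_eq_sum_range hk]
  set γ := gam k
  have hcos := cos_gam_div_two_pos hk
  have htelescope : ∑ j ∈ range k, (f1 ((k + 1 + j) * γ) - f1 ((k + 1 + j) * γ - γ)) = √3 - 1 := by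
    have := sum_range_sub (fun j : ℕ => f1 ((k + j) * γ)) k
    push_cast at this
    have hends : f1 (π / 3) - f1 (π / 6) = √3 - 1 := by
      simp only [f1, sin_pi_div_three, cos_pi_div_three, sin_pi_div_six, cos_pi_div_six]
      ring
    rw [show ((k : ℝ) + k) * γ = π / 3 by linear_combination 2 * hkγ, add_zero, hkγ, hends]
      at this
    refine (sum_congr rfl fun j _ => ?_).trans this
    ring_nf
  have hsines : 2 * sin (γ / 2) * ∑ j ∈ range k, sin (2 * ((k + 1 + j) * γ) - γ / 2 + 2 * π / 3) =
      (cos (γ / 2 + π / 3) - cos (γ / 2)) / (2 * cos (γ / 2)) := by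
    have := two_sin_mul_sum_range_sin (π + 3 * γ / 2) γ k
    rw [show π + 3 * γ / 2 - γ = γ / 2 + π by ring,
      show π + 3 * γ / 2 + (2 * k - 1) * γ = γ / 2 + π / 3 + π by linear_combination 2 * hkγ,
      cos_add_pi, cos_add_pi, show sin γ = sin (2 * (γ / 2)) by ring_nf, sin_two_mul] at this
    rw [eq_div_iff (by positivity), sum_congr rfl fun (j : ℕ) _ => congrArg sin
      (show 2 * ((k + 1 + j : ℝ) * γ) - γ / 2 + 2 * π / 3 = π + 3 * γ / 2 + 2 * j * γ by
        linear_combination 2 * hkγ)]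
    linear_combination this
  simp_rw [f1_sub_f1_sub_mul_one_sub_f2]
  rw [sum_add_distrib, ← mul_sum, htelescope, sum_sub_distrib, sum_const, card_range, mul_sub,
    hsines, nsmul_eq_mul]
  ring

noncomputable def S2'Remainder (n x : ℝ) : ℝ :=
  n * (x - sin x) / 2 - √3 * n * sin (x / 2) ^ 2 - √3 / 4 * tan (x / 2)

lemma S2'_sub_limit_eq {k : ℕ} (hk : k ≠ 0) :
    S2' k - (√3 - 5 / 4 - π / 12) = S2'Remainder k (gam k) := by
  have hkγ := natCast_mul_gam hk
  have hcos := (cos_gam_div_two_pos hk).ne'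
  rw [S2'_eq_closed_form hk, S2'Remainder, tan_eq_sin_div_cos, cos_add, sin_add, cos_pi_div_three,
    sin_pi_div_three, sin_pi_div_six, cos_pi_div_six,
    show sin (gam k) = sin (2 * (gam k / 2)) by ring_nf, sin_two_mul]
  field_simp
  linear_combination (-96 * cos (gam k / 2)) * hkγ

lemma abs_S2'Remainder_le {n x : ℝ} (hn : 0 ≤ n) (hx : 0 ≤ x) (hx1 : x ≤ 1) (hnx : n * x ≤ 1) :
    |S2'Remainder n x| ≤ x := by
  have h3 : √3 ≤ 2 := by
    rw [sqrt_le_left (by norm_num)]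
    norm_num
  have hsub1 : x - sin x ≤ x ^ 3 / 6 := by linarith [sin_ge_sub_cube hx]
  have hs0 : 0 ≤ sin (x / 2) :=
    sin_nonneg_of_nonneg_of_le_pi (by linarith) (by linarith [pi_gt_three])
  have hs1 : sin (x / 2) ≤ x / 2 := sin_le (by linarith)
  have hc : 1 / 2 ≤ cos (x / 2) := by nlinarith [one_sub_sq_div_two_le_cos (x := x / 2)]
  have ht0 : 0 ≤ tan (x / 2) := by
    rw [tan_eq_sin_div_cos]
    positivity
  have ht1 : tan (x / 2) ≤ x := by
    rw [tan_eq_sin_div_cos, div_le_iff₀ (by linarith)]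
    nlinarith
  have hA : n * (x - sin x) ≤ x :=
    calc n * (x - sin x) ≤ n * (x ^ 3 / 6) := by gcongr
      _ = n * x * x ^ 2 / 6 := by ring
      _ ≤ x := by nlinarith [mul_le_mul_of_nonneg_right hnx (sq_nonneg x)]
  have hB : √3 * n * sin (x / 2) ^ 2 ≤ x / 2 := by
    have : sin (x / 2) ^ 2 ≤ x ^ 2 / 4 := by nlinarith
    have : √3 * n * sin (x / 2) ^ 2 ≤ 2 * n * (x ^ 2 / 4) := by gcongr
    nlinarith
  have hC : √3 / 4 * tan (x / 2) ≤ x / 2 := by nlinarith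
  have hA0 : 0 ≤ n * (x - sin x) / 2 :=
    div_nonneg (mul_nonneg hn (sub_nonneg.2 (sin_le hx))) zero_le_two
  have hBC0 : 0 ≤ √3 * n * sin (x / 2) ^ 2 + √3 / 4 * tan (x / 2) := by positivity
  rw [S2'Remainder, abs_le]
  constructor <;> linarith

theorem S2'_asymptotics :
    ∃ K : ℝ, ∀ k : ℕ, 1 ≤ k →
      |S2' k - (Real.sqrt 3 - 5 / 4 - Real.pi / 12)| ≤ K / k := by
  refine ⟨1, fun k hk => ?_⟩
  have hk0 : k ≠ 0 := Nat.one_le_iff_ne_zero.1 hk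
  have hkγ : (k : ℝ) * gam k ≤ 1 := by linarith [natCast_mul_gam hk0, pi_le_four]
  rw [S2'_sub_limit_eq hk0]
  calc _ ≤ gam k := abs_S2'Remainder_le k.cast_nonneg (gam_pos hk0).le
        (by linarith [gam_le_pi_div_six hk0, pi_le_four]) hkγ
    _ ≤ 1 / k := (le_div_iff₀ (by positivity)).2 (by linarith)
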